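/- arXiv:2207.11663 — 6 statements merged into one kernel-verified Lean document; each statement's English description precedes it below -/
import Mathlib

section
/- Let d, r', r'' be positive integers, k ∈ ℤ_{++}^{r'} and l ∈ ℤ_{++}^{r''} (with the conventions k_{r'+1} := 0, l_{r''+1} := 0). Then, in the polynomial ring ℂ[X], the polynomial ∏_{i=1}^{r'+1} ∏_{j=1}^{r''+1} (X − d(i+j−2)/2)_{k_i+l_j} divides the polynomial (X)_{φ₀(k,l),d} · ∏_{i=1}^{r'} ∏_{j=1}^{r''} (X − d(i+j−1)/2)_{k_i+l_j}, where (X)_{φ₀(k,l),d} := ∏_{a=1}^{r'+r''} (X − d(a−1)/2)_{φ₀(k,l)_a}. Equivalently, the rational function (λ)_{φ₀(k,l),d} · C₀^d(λ,k,l) extends to a polynomial in λ. -/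
open Polynomial Finset

/-- `(X - c)_m := ∏_{t=0}^{m-1} (X - c + t)` in `ℂ[X]`. -/
noncomputable def pochPoly (c : ℂ) (m : ℕ) : Polynomial ℂ :=
  ∏ t ∈ Finset.range m, (Polynomial.X - Polynomial.C c + (t : Polynomial ℂ))

/-- `φ₀(k,l)_a := min{k_i + l_j : 1 ≤ i ≤ r'+1, 1 ≤ j ≤ r''+1, i+j = a+1}`. -/
noncomputable def phi0 (r' r'' : ℕ) (k l : ℕ → ℕ) (a : ℕ) : ℕ :=
  sInf {m : ℕ | ∃ i j : ℕ, 1 ≤ i ∧ i ≤ r' + 1 ∧ 1 ≤ j ∧ j ≤ r'' + 1 ∧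
    i + j = a + 1 ∧ m = k i + l j}

/-- The denominator `∏_{i=1}^{r'+1}∏_{j=1}^{r''+1}(X − d(i+j−2)/2)_{k_i+l_j}` of `C₀^d`. -/
noncomputable def denom0 (d r' r'' : ℕ) (k l : ℕ → ℕ) : Polynomial ℂ :=
  ∏ i ∈ Finset.Icc 1 (r' + 1), ∏ j ∈ Finset.Icc 1 (r'' + 1),
    pochPoly ((d : ℂ) * ((i : ℂ) + (j : ℂ) - 2) / 2) (k i + l j)

/-- The numerator `∏_{i=1}^{r'}∏_{j=1}^{r''}(X − d(i+j−1)/2)_{k_i+l_j}` of `C₀^d`. -/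
noncomputable def numer0 (d r' r'' : ℕ) (k l : ℕ → ℕ) : Polynomial ℂ :=
  ∏ i ∈ Finset.Icc 1 r', ∏ j ∈ Finset.Icc 1 r'',
    pochPoly ((d : ℂ) * ((i : ℂ) + (j : ℂ) - 1) / 2) (k i + l j)

/-- The polynomial `(X)_{φ₀(k,l),d} = ∏_{a=1}^{r'+r''}(X − d(a−1)/2)_{φ₀(k,l)_a}`. -/
noncomputable def phiPoly0 (d r' r'' : ℕ) (k l : ℕ → ℕ) : Polynomial ℂ :=
  ∏ a ∈ Finset.Icc 1 (r' + r''),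
    pochPoly ((d : ℂ) * ((a : ℂ) - 1) / 2) (phi0 r' r'' k l a)

/-!
Sort the linear factors by their shift. The denominator factor indexed by `(i, j)` and the
numerator factor indexed by `(i, j - 1)` both have shift `d(a-1)/2` where `a = i + j - 1`, so
it suffices to prove the divisibility on each diagonal `a` separately, using that
`(X - c)_m ∣ (X - c)_n` for `m ≤ n`. On the diagonal `i + j = a + 1` of the
`(r'+1) × (r''+1)` box, let `(i₀, j₀)` be a cell where `k_i + l_j` attains its minimum
`φ₀(k,l)_a`; it is matched with the factor of `(X)_{φ₀(k,l),d}`. Every other cell `(i, j)` is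
matched injectively with the cell `(i, j - 1)` (if `i < i₀`) or `(i - 1, j)` (if `i > i₀`) of the
numerator's diagonal `i + j = a`, whose entry is at least `k_i + l_j` because `k` and `l`
decrease.
-/

namespace Finset

theorem prod_dvd_mul_prod_of_injOn {ι κ M : Type*} [CommMonoid M] [DecidableEq ι]
    [DecidableEq κ] {s : Finset ι} {t : Finset κ} {g : ι → M} {h : κ → M} {x₀ : ι}
    (hx₀ : x₀ ∈ s) (σ : ι → κ) (hσ : Set.MapsTo σ (s.erase x₀) t)
    (hinj : Set.InjOn σ (s.erase x₀)) (hdvd : ∀ x ∈ s.erase x₀, g x ∣ h (σ x)) :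
    ∏ x ∈ s, g x ∣ g x₀ * ∏ y ∈ t, h y := by
  rw [← mul_prod_erase s g hx₀]
  refine mul_dvd_mul_left _ ?_
  calc ∏ x ∈ s.erase x₀, g x ∣ ∏ x ∈ s.erase x₀, h (σ x) := prod_dvd_prod_of_dvd _ _ hdvd
    _ = ∏ y ∈ (s.erase x₀).image σ, h y := (prod_image hinj).symm
    _ ∣ ∏ y ∈ t, h y := prod_dvd_prod_of_subset _ _ _ (image_subset_iff.2 hσ)

end Finset

theorem pochPoly_dvd_pochPoly (c : ℂ) {m n : ℕ} (hmn : m ≤ n) : pochPoly c m ∣ pochPoly c n :=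
  prod_dvd_prod_of_subset _ _ _ (range_subset_range.2 hmn)

theorem antitone_Icc_succ_of_eq_zero {f : ℕ → ℕ} {r : ℕ}
    (hf : ∀ i j, 1 ≤ i → i ≤ j → j ≤ r → f j ≤ f i) (hf0 : f (r + 1) = 0) :
    ∀ i j, 1 ≤ i → i ≤ j → j ≤ r + 1 → f j ≤ f i := by
  intro i j hi hij hj
  rcases hj.lt_or_eq with hj | rfl
  · exact hf i j hi hij (by omega)
  · simp [hf0]

def denomDiag (r' r'' a : ℕ) : Finset (ℕ × ℕ) :=
  {x ∈ Icc 1 (r' + 1) ×ˢ Icc 1 (r'' + 1) | x.1 + x.2 = a + 1}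

def numerDiag (r' r'' a : ℕ) : Finset (ℕ × ℕ) :=
  {x ∈ Icc 1 r' ×ˢ Icc 1 r'' | x.1 + x.2 = a}

theorem mem_denomDiag {r' r'' a : ℕ} {x : ℕ × ℕ} :
    x ∈ denomDiag r' r'' a ↔
      (1 ≤ x.1 ∧ x.1 ≤ r' + 1) ∧ (1 ≤ x.2 ∧ x.2 ≤ r'' + 1) ∧ x.1 + x.2 = a + 1 := by
  simp only [denomDiag, mem_filter, mem_product, mem_Icc, and_assoc]

theorem mem_numerDiag {r' r'' a : ℕ} {x : ℕ × ℕ} :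
    x ∈ numerDiag r' r'' a ↔ (1 ≤ x.1 ∧ x.1 ≤ r') ∧ (1 ≤ x.2 ∧ x.2 ≤ r'') ∧ x.1 + x.2 = a := by
  simp only [numerDiag, mem_filter, mem_product, mem_Icc, and_assoc]

theorem denom0_eq_prod_denomDiag (d r' r'' : ℕ) (k l : ℕ → ℕ) :
    denom0 d r' r'' k l = ∏ a ∈ Icc 1 (r' + r'' + 1), ∏ x ∈ denomDiag r' r'' a,
      pochPoly ((d : ℂ) * ((a : ℂ) - 1) / 2) (k x.1 + l x.2) := by
  rw [denom0, ← prod_product', ← prod_fiberwise_of_maps_to (g := fun x => x.1 + x.2 - 1)]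
  · refine prod_congr rfl fun a _ => ?_
    have hdiag : denomDiag r' r'' a =
        {x ∈ Icc 1 (r' + 1) ×ˢ Icc 1 (r'' + 1) | x.1 + x.2 - 1 = a} :=
      filter_congr fun x hx => by simp only [mem_product, mem_Icc] at hx; omega
    rw [hdiag]
    refine prod_congr rfl fun x hx => ?_
    simp only [mem_filter, mem_product, mem_Icc] at hx
    have ha : (a : ℂ) = x.1 + x.2 - 1 := by
      rw [← hx.2, Nat.cast_sub (by omega), Nat.cast_add, Nat.cast_one]
    rw [ha]
    ring_nf
  · intro x hx
    simp only [mem_product, mem_Icc] at hx ⊢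
    omega

theorem numer0_eq_prod_numerDiag (d r' r'' : ℕ) (k l : ℕ → ℕ) :
    numer0 d r' r'' k l = ∏ a ∈ Icc 1 (r' + r'' + 1), ∏ x ∈ numerDiag r' r'' a,
      pochPoly ((d : ℂ) * ((a : ℂ) - 1) / 2) (k x.1 + l x.2) := by
  rw [numer0, ← prod_product', ← prod_fiberwise_of_maps_to (g := fun x => x.1 + x.2)]
  · refine prod_congr rfl fun a _ => prod_congr rfl fun x hx => ?_
    rw [← (mem_filter.1 hx).2, Nat.cast_add]
  · intro x hx
    simp only [mem_product, mem_Icc] at hx ⊢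
    omega

theorem phi0_last_eq_zero (r' r'' : ℕ) {k l : ℕ → ℕ} (hk0 : k (r' + 1) = 0)
    (hl0 : l (r'' + 1) = 0) : phi0 r' r'' k l (r' + r'' + 1) = 0 :=
  Nat.sInf_eq_zero.2 <| .inl ⟨r' + 1, r'' + 1, by omega, le_rfl, by omega, le_rfl, by omega,
    by rw [hk0, hl0]⟩

theorem phiPoly0_eq_prod_Icc_succ (d r' r'' : ℕ) {k l : ℕ → ℕ} (hk0 : k (r' + 1) = 0)
    (hl0 : l (r'' + 1) = 0) :
    phiPoly0 d r' r'' k l = ∏ a ∈ Icc 1 (r' + r'' + 1),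
      pochPoly ((d : ℂ) * ((a : ℂ) - 1) / 2) (phi0 r' r'' k l a) := by
  rw [prod_Icc_succ_top (by omega), phi0_last_eq_zero r' r'' hk0 hl0, phiPoly0]
  simp [pochPoly]

theorem exists_mem_denomDiag_phi0_eq (r' r'' : ℕ) (k l : ℕ → ℕ) {a : ℕ}
    (ha : a ∈ Icc 1 (r' + r'' + 1)) :
    ∃ x ∈ denomDiag r' r'' a, phi0 r' r'' k l a = k x.1 + l x.2 := by
  rw [mem_Icc] at ha
  have hmem : phi0 r' r'' k l a ∈ _ := Nat.sInf_mem ⟨_, min (r' + 1) a,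
    a + 1 - min (r' + 1) a, by omega, by omega, by omega, by omega, by omega, rfl⟩
  obtain ⟨i, j, hi₁, hi₂, hj₁, hj₂, hij, hφ⟩ := hmem
  exact ⟨(i, j), by simp only [mem_denomDiag]; omega, hφ⟩

theorem prod_denomDiag_dvd {M : Type*} [CommMonoid M] {P : ℕ → M}
    (hP : ∀ m n, m ≤ n → P m ∣ P n) {r' r'' : ℕ} {k l : ℕ → ℕ}
    (hk : ∀ i j, 1 ≤ i → i ≤ j → j ≤ r' + 1 → k j ≤ k i)
    (hl : ∀ i j, 1 ≤ i → i ≤ j → j ≤ r'' + 1 → l j ≤ l i) {a : ℕ} {x₀ : ℕ × ℕ}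
    (hx₀ : x₀ ∈ denomDiag r' r'' a) :
    ∏ x ∈ denomDiag r' r'' a, P (k x.1 + l x.2) ∣
      P (k x₀.1 + l x₀.2) * ∏ x ∈ numerDiag r' r'' a, P (k x.1 + l x.2) := by
  obtain ⟨i₀, j₀⟩ := x₀
  have h₀ := mem_denomDiag.1 hx₀
  refine prod_dvd_mul_prod_of_injOn hx₀
    (fun x => if x.1 < i₀ then (x.1, x.2 - 1) else (x.1 - 1, x.2)) ?_ ?_ ?_
  · rintro ⟨i, j⟩ hx
    simp only [mem_coe, mem_erase, mem_denomDiag, ne_eq, Prod.ext_iff] at hx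
    dsimp only
    split_ifs <;> simp only [mem_coe, mem_numerDiag] <;> omega
  · rintro ⟨i, j⟩ hx ⟨i', j'⟩ hx' h
    simp only [mem_coe, mem_erase, mem_denomDiag, ne_eq, Prod.ext_iff] at hx hx' h ⊢
    split_ifs at h <;> omega
  · rintro ⟨i, j⟩ hx
    simp only [mem_erase, mem_denomDiag, ne_eq, Prod.ext_iff] at hx
    refine hP _ _ ?_
    split_ifs
    · exact Nat.add_le_add_left (hl (j - 1) j (by omega) (by omega) (by omega)) _
    · exact Nat.add_le_add_right (hk (i - 1) i (by omega) (by omega) (by omega)) _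

theorem denom_dvd_phiPoly_mul_numer_general (d r' r'' : ℕ) (k l : ℕ → ℕ)
    (hk : ∀ i j, 1 ≤ i → i ≤ j → j ≤ r' → k j ≤ k i) (hk0 : k (r' + 1) = 0)
    (hl : ∀ i j, 1 ≤ i → i ≤ j → j ≤ r'' → l j ≤ l i) (hl0 : l (r'' + 1) = 0) :
    denom0 d r' r'' k l ∣ phiPoly0 d r' r'' k l * numer0 d r' r'' k l := by
  rw [denom0_eq_prod_denomDiag, numer0_eq_prod_numerDiag,
    phiPoly0_eq_prod_Icc_succ d r' r'' hk0 hl0, ← prod_mul_distrib]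
  refine prod_dvd_prod_of_dvd _ _ fun a ha => ?_
  obtain ⟨x₀, hx₀, hφ⟩ := exists_mem_denomDiag_phi0_eq r' r'' k l ha
  rw [hφ]
  exact prod_denomDiag_dvd (fun _ _ => pochPoly_dvd_pochPoly _)
    (antitone_Icc_succ_of_eq_zero hk hk0) (antitone_Icc_succ_of_eq_zero hl hl0) hx₀

/-- Theorem 5.2 (restricted): `(λ)_{φ₀(k,l),d}·C₀^d(λ,k,l)` is a polynomial in `λ`. -/
theorem denom_dvd_phiPoly_mul_numer (d r' r'' : ℕ) (hd : 0 < d) (hr' : 0 < r')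
    (hr'' : 0 < r'') (k l : ℕ → ℕ)
    (hk : ∀ i j, 1 ≤ i → i ≤ j → j ≤ r' → k j ≤ k i) (hk0 : k (r' + 1) = 0)
    (hl : ∀ i j, 1 ≤ i → i ≤ j → j ≤ r'' → l j ≤ l i) (hl0 : l (r'' + 1) = 0) :
    denom0 d r' r'' k l ∣ phiPoly0 d r' r'' k l * numer0 d r' r'' k l :=
  denom_dvd_phiPoly_mul_numer_general d r' r'' k l hk hk0 hl hl0
end

section
/- Let s be a positive integer and let k = (k₁,…,k_s), l = (l₁,…,l_s), n = (n₁,…,n_s) be weakly decreasing tuples of nonnegative integers with k_a ≤ n_a for every a. Suppose there exists a Littlewood–Richardson tableau of shape n/k and weight l, i.e., a function T assigning to each cell (a,b) with 1 ≤ a ≤ s and k_a < b ≤ n_a a value T(a,b) ∈ {1,…,s} such that: (i) each row is weakly increasing: T(a,b) ≤ T(a,b+1) whenever both cells lie in the shape; (ii) each column is strictly increasing: T(a,b) < T(a+1,b) whenever both cells lie in the shape; (iii) for each j ∈ {1,…,s}, exactly l_j cells carry the value j; (iv) (lattice word condition) reading the entries of row 1 from right to left, then row 2 from right to left, and so on down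 to row s, every initial segment of the resulting word contains, for every j, at least as many occurrences of j as of j+1. Then: (1) n_{s−i−j} ≥ k_{s−i} + l_{s−j} for all integers i, j ≥ 0 with i + j < s; and (2) n_{i+j−1} ≤ k_i + l_j for all integers i, j ≥ 1 with i + j ≤ s + 1. -/
/-! The lattice condition, read at the leftmost entry `v + 1` of row `a`, says that rows `1, …, a`
contain no more entries `v + 1` than rows `1, …, a - 1` contain entries `v`. Iterating, rows
`1, …, a + t` contain no more entries `v + t` than rows `1, …, a` contain entries `v`; in
particular every entry of row `a` is at most `a`.

(1) All `l_{s-j}` entries `s - j` lie in rows `1, …, s`, so rows `1, …, s - i` contain at least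
`l_{s-j}` entries `s - i - j`. Strict columns put them in distinct columns, and these columns lie
in `(k_{s-i}, n_{s-i-j}]` because an entry `v` can only occur in a row `≥ v`.

(2) Strict columns make every entry of row `i + j - 1` in a column `b ∈ (k_i, n_{i+j-1}]` at
least `j`. By the lattice condition, the entries `≥ j` of a single row `a` are no more numerous
than the entries `j` of rows `1, …, a`, hence at most `l_j`. -/

open Finset

/-- The number of occurrences of the letter `j` in the initial segment of the
row-reading word (each row read right-to-left, rows from top to bottom) of a skew
tableau `T` of shape `n/k`, ending at the cell `(a,b)` (inclusive). -/
def lrCount (k n : ℕ → ℕ) (T : ℕ → ℕ → ℕ) (j a b : ℕ) : ℕ :=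
  (∑ a' ∈ Finset.Icc 1 (a - 1),
      ((Finset.Icc (k a' + 1) (n a')).filter (fun b' => T a' b' = j)).card) +
    ((Finset.Icc b (n a)).filter (fun b' => T a b' = j)).card

def rowCells (k n : ℕ → ℕ) (T : ℕ → ℕ → ℕ) (v a : ℕ) : Finset ℕ :=
  (Icc (k a + 1) (n a)).filter (fun b => T a b = v)

def entryCount (k n : ℕ → ℕ) (T : ℕ → ℕ → ℕ) (v a : ℕ) : ℕ :=
  ∑ r ∈ Icc 1 a, #(rowCells k n T v r)

def RowsWeaklyIncrease (s : ℕ) (k n : ℕ → ℕ) (T : ℕ → ℕ → ℕ) : Prop :=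
  ∀ a b, 1 ≤ a → a ≤ s → k a < b → b + 1 ≤ n a → T a b ≤ T a (b + 1)

def ColumnsStrictlyIncrease (s : ℕ) (k n : ℕ → ℕ) (T : ℕ → ℕ → ℕ) : Prop :=
  ∀ a b, 1 ≤ a → a + 1 ≤ s → k a < b → b ≤ n a →
    k (a + 1) < b → b ≤ n (a + 1) → T a b < T (a + 1) b

def IsLatticeReadingWord (s : ℕ) (k n : ℕ → ℕ) (T : ℕ → ℕ → ℕ) : Prop :=
  ∀ a b, 1 ≤ a → a ≤ s → k a < b → b ≤ n a → ∀ j, 1 ≤ j →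
    lrCount k n T (j + 1) a b ≤ lrCount k n T j a b

lemma add_sub_le_of_lt_succ {f : ℕ → ℕ} {a c : ℕ} (hf : ∀ r, a ≤ r → r < c → f r < f (r + 1))
    {b : ℕ} (hab : a ≤ b) (hbc : b ≤ c) : f a + (b - a) ≤ f b := by
  induction b, hab using Nat.le_induction with
  | base => simp
  | succ b hab ih =>
    have := hf b hab (by omega)
    have := ih (by omega)
    omega

section Tableau

variable {s : ℕ} {k n : ℕ → ℕ} {T : ℕ → ℕ → ℕ}

@[simp]
lemma entryCount_zero (v : ℕ) : entryCount k n T v 0 = 0 := by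
  simp [entryCount]

lemma entryCount_succ (v a : ℕ) :
    entryCount k n T v (a + 1) = entryCount k n T v a + #(rowCells k n T v (a + 1)) :=
  sum_Icc_succ_top (by omega) _

lemma entryCount_mono (v : ℕ) : Monotone (entryCount k n T v) := fun _ _ h =>
  sum_le_sum_of_subset (Icc_subset_Icc_right h)

lemma RowsWeaklyIncrease.monotoneOn (hrow : RowsWeaklyIncrease s k n T) {a : ℕ} (ha : 1 ≤ a)
    (has : a ≤ s) : MonotoneOn (T a) (Set.Icc (k a + 1) (n a)) :=
  monotoneOn_of_le_succ Set.ordConnected_Icc fun b _ hb hb' => by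
    simp only [Order.succ_eq_add_one, Set.mem_Icc] at hb hb'
    exact hrow a b ha has (by omega) hb'.2

lemma ColumnsStrictlyIncrease.add_sub_le (hk : AntitoneOn k (Set.Icc 1 s))
    (hn : AntitoneOn n (Set.Icc 1 s)) (hcol : ColumnsStrictlyIncrease s k n T) {a a' b : ℕ}
    (ha : 1 ≤ a) (haa' : a ≤ a') (ha' : a' ≤ s) (hb : k a < b) (hb' : b ≤ n a') :
    T a b + (a' - a) ≤ T a' b := by
  refine add_sub_le_of_lt_succ (f := (T · b)) (fun r har hra' => ?_) haa' le_rfl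
  have : k r ≤ k a := hk ⟨ha, by omega⟩ ⟨by omega, by omega⟩ har
  have : k (r + 1) ≤ k a := hk ⟨ha, by omega⟩ ⟨by omega, by omega⟩ (by omega)
  have : n a' ≤ n r := hn ⟨by omega, by omega⟩ ⟨by omega, ha'⟩ hra'.le
  have : n a' ≤ n (r + 1) := hn ⟨by omega, by omega⟩ ⟨by omega, ha'⟩ hra'
  exact hcol r b (by omega) (by omega) (by omega) (by omega) (by omega) (by omega)

/-- Read the lattice condition at the leftmost entry `v + 1` of row `a + 1`: from there on the
row contains every entry `v + 1` of the row and, being weakly increasing, no entry `v`. -/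
lemma IsLatticeReadingWord.entryCount_add_card_rowCells_le (hrow : RowsWeaklyIncrease s k n T)
    (hlat : IsLatticeReadingWord s k n T) {v a : ℕ} (hv : 1 ≤ v) (ha : a + 1 ≤ s)
    (hne : (rowCells k n T (v + 1) (a + 1)).Nonempty) :
    entryCount k n T (v + 1) a + #(rowCells k n T (v + 1) (a + 1)) ≤ entryCount k n T v a := by
  set R := rowCells k n T (v + 1) (a + 1)
  set b₀ := R.min' hne
  have hb₀ : b₀ ∈ R := R.min'_mem hne
  simp only [R, rowCells, mem_filter, mem_Icc] at hb₀
  have hsuffix : R ⊆ (Icc b₀ (n (a + 1))).filter (fun b => T (a + 1) b = v + 1) := by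
    intro b hb
    have := R.min'_le b hb
    simp only [R, rowCells, mem_filter, mem_Icc] at hb ⊢
    exact ⟨⟨this, hb.1.2⟩, hb.2⟩
  have hnone : (Icc b₀ (n (a + 1))).filter (fun b => T (a + 1) b = v) = ∅ := by
    refine filter_eq_empty_iff.2 fun b hb => ?_
    simp only [mem_Icc] at hb
    have := hrow.monotoneOn (by omega) ha hb₀.1 ⟨by omega, hb.2⟩ hb.1
    omega
  have hlattice : entryCount k n T (v + 1) a +
        #((Icc b₀ (n (a + 1))).filter (fun b => T (a + 1) b = v + 1)) ≤
      entryCount k n T v a + #((Icc b₀ (n (a + 1))).filter (fun b => T (a + 1) b = v)) :=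
    hlat (a + 1) b₀ (by omega) ha (by omega) hb₀.1.2 v hv
  rw [hnone, card_empty, add_zero] at hlattice
  exact (Nat.add_le_add_left (card_le_card hsuffix) _).trans hlattice

lemma IsLatticeReadingWord.entryCount_succ_le (hrow : RowsWeaklyIncrease s k n T)
    (hlat : IsLatticeReadingWord s k n T) {v a : ℕ} (hv : 1 ≤ v) (ha : a ≤ s) :
    entryCount k n T (v + 1) a ≤ entryCount k n T v (a - 1) := by
  induction a with
  | zero => simp
  | succ a ih =>
    obtain hempty | hne := (rowCells k n T (v + 1) (a + 1)).eq_empty_or_nonempty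
    · rw [entryCount_succ, hempty, card_empty, add_zero]
      exact (ih (by omega)).trans (entryCount_mono v (by omega))
    · have := hlat.entryCount_add_card_rowCells_le hrow hv ha hne
      rw [entryCount_succ, Nat.add_sub_cancel]
      omega

lemma IsLatticeReadingWord.entryCount_add_le (hrow : RowsWeaklyIncrease s k n T)
    (hlat : IsLatticeReadingWord s k n T) {v a t : ℕ} (hv : 1 ≤ v) (ha : a + t ≤ s) :
    entryCount k n T (v + t) (a + t) ≤ entryCount k n T v a := by
  induction t with
  | zero => rfl
  | succ t ih =>
    have := hlat.entryCount_succ_le hrow (v := v + t) (a := a + t + 1) (by omega) ha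
    rw [Nat.add_sub_cancel] at this
    exact this.trans (ih (by omega))

lemma IsLatticeReadingWord.le_row (hrow : RowsWeaklyIncrease s k n T)
    (hlat : IsLatticeReadingWord s k n T) {a b : ℕ} (ha : 1 ≤ a) (has : a ≤ s) (hb : k a < b)
    (hbn : b ≤ n a) : T a b ≤ a := by
  by_contra! hlt
  have hcell : b ∈ rowCells k n T (T a b) a := mem_filter.2 ⟨mem_Icc.2 ⟨hb, hbn⟩, rfl⟩
  have hpos : 0 < entryCount k n T (T a b) a :=
    (card_pos.2 ⟨b, hcell⟩).trans_le
      (single_le_sum (f := fun r => #(rowCells k n T (T a b) r)) (fun _ _ => Nat.zero_le _)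
        (mem_Icc.2 ⟨ha, le_rfl⟩))
  have := hlat.entryCount_add_le hrow (v := T a b - a) (a := 0) (t := a) (by omega) (by omega)
  rw [Nat.sub_add_cancel hlt.le, zero_add, entryCount_zero] at this
  omega

/-- Entries `v` in rows `1, …, a` occupy distinct columns in `(k a, n v]`. -/
lemma entryCount_le_sub (hk : AntitoneOn k (Set.Icc 1 s)) (hn : AntitoneOn n (Set.Icc 1 s))
    (hrow : RowsWeaklyIncrease s k n T) (hcol : ColumnsStrictlyIncrease s k n T)
    (hlat : IsLatticeReadingWord s k n T) {v a : ℕ} (hv : 1 ≤ v) (ha : a ≤ s) :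
    entryCount k n T v a ≤ n v - k a := by
  have hdisj_of_lt : ∀ r r', 1 ≤ r → r < r' → r' ≤ a →
      Disjoint (rowCells k n T v r) (rowCells k n T v r') := by
    intro r r' hr hrr' hr'
    refine disjoint_left.2 fun b hb hb' => ?_
    simp only [rowCells, mem_filter, mem_Icc] at hb hb'
    have : k r' ≤ k r := hk ⟨hr, by omega⟩ ⟨by omega, by omega⟩ hrr'.le
    have := hcol.add_sub_le hk hn hr hrr'.le (by omega) (by omega) hb'.1.2
    omega
  have hdisj : (Icc 1 a : Set ℕ).PairwiseDisjoint (rowCells k n T v) := by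
    intro r hr r' hr' hne
    simp only [coe_Icc, Set.mem_Icc] at hr hr'
    rcases hne.lt_or_gt with h | h
    · exact hdisj_of_lt r r' hr.1 h hr'.2
    · exact (hdisj_of_lt r' r hr'.1 h hr.2).symm
  have hsub : (Icc 1 a).biUnion (rowCells k n T v) ⊆ Icc (k a + 1) (n v) := by
    intro b hb
    simp only [mem_biUnion, mem_Icc, rowCells, mem_filter] at hb ⊢
    obtain ⟨r, hr, ⟨hkb, hbn⟩, hTv⟩ := hb
    have hvr := hlat.le_row hrow hr.1 (by omega) (by omega) hbn
    have : k a ≤ k r := hk ⟨hr.1, by omega⟩ ⟨by omega, ha⟩ hr.2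
    have : n r ≤ n v := hn ⟨hv, by omega⟩ ⟨hr.1, by omega⟩ (hTv ▸ hvr)
    omega
  calc entryCount k n T v a = #((Icc 1 a).biUnion (rowCells k n T v)) := (card_biUnion hdisj).symm
    _ ≤ #(Icc (k a + 1) (n v)) := card_le_card hsub
    _ = n v - k a := by simp

lemma IsLatticeReadingWord.sum_card_rowCells_le (hrow : RowsWeaklyIncrease s k n T)
    (hlat : IsLatticeReadingWord s k n T) {w a : ℕ} (d : ℕ) (hw : 1 ≤ w) (ha : 1 ≤ a)
    (has : a ≤ s) : ∑ t ∈ range d, #(rowCells k n T (w + t) a) ≤ entryCount k n T w a := by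
  obtain ⟨a, rfl⟩ : ∃ a', a = a' + 1 := ⟨a - 1, by omega⟩
  induction d generalizing w with
  | zero => simp
  | succ d ih =>
    rw [sum_range_succ', add_zero, entryCount_succ]
    have hshift : ∑ t ∈ range d, #(rowCells k n T (w + (t + 1)) (a + 1)) =
        ∑ t ∈ range d, #(rowCells k n T (w + 1 + t) (a + 1)) :=
      sum_congr rfl fun t _ => by rw [add_comm t 1, add_assoc]
    rw [hshift]
    have := hlat.entryCount_succ_le hrow (v := w) (a := a + 1) hw has
    rw [Nat.add_sub_cancel] at this
    have := ih (w := w + 1) (by omega)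
    omega

/-- Every entry of row `i + j` in a column `b ∈ (k i, n (i + j)]` is at least `j + 1`. -/
lemma card_Icc_le_entryCount (hk : AntitoneOn k (Set.Icc 1 s)) (hn : AntitoneOn n (Set.Icc 1 s))
    (hT : ∀ a b, 1 ≤ a → a ≤ s → k a < b → b ≤ n a → 1 ≤ T a b ∧ T a b ≤ s)
    (hrow : RowsWeaklyIncrease s k n T) (hcol : ColumnsStrictlyIncrease s k n T)
    (hlat : IsLatticeReadingWord s k n T) {i j : ℕ} (hi : 1 ≤ i) (hij : i + j ≤ s) :
    n (i + j) - k i ≤ entryCount k n T (j + 1) (i + j) := by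
  have hsub : Icc (k i + 1) (n (i + j)) ⊆
      (Ico (j + 1) (s + 1)).biUnion (fun v => rowCells k n T v (i + j)) := by
    intro b hb
    simp only [mem_Icc] at hb
    have : k (i + j) ≤ k i := hk ⟨hi, by omega⟩ ⟨by omega, hij⟩ (by omega)
    have : n (i + j) ≤ n i := hn ⟨hi, by omega⟩ ⟨by omega, hij⟩ (by omega)
    have hTi := hT i b hi (by omega) (by omega) (by omega)
    have hTij := hT (i + j) b (by omega) hij (by omega) hb.2
    have hcolumn := hcol.add_sub_le hk hn hi (a' := i + j) (by omega) hij (by omega) hb.2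
    simp only [mem_biUnion, mem_Ico, rowCells, mem_filter, mem_Icc]
    exact ⟨T (i + j) b, ⟨by omega, by omega⟩, ⟨by omega, hb.2⟩, rfl⟩
  calc n (i + j) - k i = #(Icc (k i + 1) (n (i + j))) := by simp
    _ ≤ #((Ico (j + 1) (s + 1)).biUnion (fun v => rowCells k n T v (i + j))) :=
      card_le_card hsub
    _ ≤ ∑ v ∈ Ico (j + 1) (s + 1), #(rowCells k n T v (i + j)) := card_biUnion_le
    _ = ∑ t ∈ range (s + 1 - (j + 1)), #(rowCells k n T (j + 1 + t) (i + j)) :=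
      sum_Ico_eq_sum_range _ _ _
    _ ≤ entryCount k n T (j + 1) (i + j) :=
      hlat.sum_card_rowCells_le hrow _ (by omega) (by omega) hij

end Tableau

theorem lr_tableau_inequalities_general (s : ℕ) (k l n : ℕ → ℕ)
    (hk : ∀ i j, 1 ≤ i → i ≤ j → j ≤ s → k j ≤ k i)
    (hn : ∀ i j, 1 ≤ i → i ≤ j → j ≤ s → n j ≤ n i)
    (hkn : ∀ a, 1 ≤ a → a ≤ s → k a ≤ n a)
    (T : ℕ → ℕ → ℕ)
    -- values lie in {1,…,s}
    (hT : ∀ a b, 1 ≤ a → a ≤ s → k a < b → b ≤ n a → 1 ≤ T a b ∧ T a b ≤ s)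
    -- (i) rows weakly increasing
    (hrow : ∀ a b, 1 ≤ a → a ≤ s → k a < b → b + 1 ≤ n a → T a b ≤ T a (b + 1))
    -- (ii) columns strictly increasing
    (hcol : ∀ a b, 1 ≤ a → a + 1 ≤ s → k a < b → b ≤ n a →
      k (a + 1) < b → b ≤ n (a + 1) → T a b < T (a + 1) b)
    -- (iii) weight is l
    (hweight : ∀ j, 1 ≤ j → j ≤ s →
      (∑ a ∈ Finset.Icc 1 s,
        ((Finset.Icc (k a + 1) (n a)).filter (fun b => T a b = j)).card) = l j)
    -- (iv) lattice word condition
    (hlattice : ∀ a b, 1 ≤ a → a ≤ s → k a < b → b ≤ n a → ∀ j, 1 ≤ j →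
      lrCount k n T (j + 1) a b ≤ lrCount k n T j a b) :
    (∀ i j : ℕ, i + j < s → k (s - i) + l (s - j) ≤ n (s - i - j)) ∧
    (∀ i j : ℕ, 1 ≤ i → 1 ≤ j → i + j ≤ s + 1 → n (i + j - 1) ≤ k i + l j) := by
  have hk' : AntitoneOn k (Set.Icc 1 s) := fun i hi j hj hij => hk i j hi.1 hij hj.2
  have hn' : AntitoneOn n (Set.Icc 1 s) := fun i hi j hj hij => hn i j hi.1 hij hj.2
  have hweight' : ∀ j, 1 ≤ j → j ≤ s → entryCount k n T j s = l j := hweight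
  refine ⟨fun i j hij => ?_, fun i j hi hj hij => ?_⟩
  · have hshift := IsLatticeReadingWord.entryCount_add_le hrow hlattice (v := s - i - j) (a := s - i) (t := i)
      (by omega) (by omega)
    rw [show s - i - j + i = s - j by omega, show s - i + i = s by omega,
      hweight' _ (by omega) (by omega)] at hshift
    have hcolumns := entryCount_le_sub hk' hn' hrow hcol hlattice (v := s - i - j) (a := s - i)
      (by omega) (by omega)
    have := hkn (s - i) (by omega) (by omega)
    have := hn' ⟨by omega, by omega⟩ ⟨by omega, by omega⟩ (show s - i - j ≤ s - i by omega)
    omega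
  · obtain ⟨j, rfl⟩ : ∃ j', j = j' + 1 := ⟨j - 1, by omega⟩
    have hrowCount := card_Icc_le_entryCount hk' hn' hT hrow hcol hlattice (j := j) hi (by omega)
    have := entryCount_mono (k := k) (n := n) (T := T) (j + 1) (show i + j ≤ s by omega)
    rw [hweight' _ hj (by omega)] at this
    rw [show i + (j + 1) - 1 = i + j by omega]
    omega

/-- Lemma 3.4: if there is a Littlewood–Richardson tableau of shape `n/k` and
weight `l`, then (1) `n_{s−i−j} ≥ k_{s−i} + l_{s−j}` for `i + j < s`, and
(2) `n_{i+j−1} ≤ k_i + l_j` for `1 ≤ i, j`, `i + j ≤ s + 1`. -/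
theorem lr_tableau_inequalities (s : ℕ) (hs : 0 < s) (k l n : ℕ → ℕ)
    (hk : ∀ i j, 1 ≤ i → i ≤ j → j ≤ s → k j ≤ k i)
    (hl : ∀ i j, 1 ≤ i → i ≤ j → j ≤ s → l j ≤ l i)
    (hn : ∀ i j, 1 ≤ i → i ≤ j → j ≤ s → n j ≤ n i)
    (hkn : ∀ a, 1 ≤ a → a ≤ s → k a ≤ n a)
    (T : ℕ → ℕ → ℕ)
    -- values lie in {1,…,s}
    (hT : ∀ a b, 1 ≤ a → a ≤ s → k a < b → b ≤ n a → 1 ≤ T a b ∧ T a b ≤ s)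
    -- (i) rows weakly increasing
    (hrow : ∀ a b, 1 ≤ a → a ≤ s → k a < b → b + 1 ≤ n a → T a b ≤ T a (b + 1))
    -- (ii) columns strictly increasing
    (hcol : ∀ a b, 1 ≤ a → a + 1 ≤ s → k a < b → b ≤ n a →
      k (a + 1) < b → b ≤ n (a + 1) → T a b < T (a + 1) b)
    -- (iii) weight is l
    (hweight : ∀ j, 1 ≤ j → j ≤ s →
      (∑ a ∈ Finset.Icc 1 s,
        ((Finset.Icc (k a + 1) (n a)).filter (fun b => T a b = j)).card) = l j)
    -- (iv) lattice word condition
    (hlattice : ∀ a b, 1 ≤ a → a ≤ s → k a < b → b ≤ n a → ∀ j, 1 ≤ j →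
      lrCount k n T (j + 1) a b ≤ lrCount k n T j a b) :
    (∀ i j : ℕ, i + j < s → k (s - i) + l (s - j) ≤ n (s - i - j)) ∧
    (∀ i j : ℕ, 1 ≤ i → 1 ≤ j → i + j ≤ s + 1 → n (i + j - 1) ≤ k i + l j) :=
  lr_tableau_inequalities_general s k l n hk hn hkn T hT hrow hcol hweight hlattice
end

section
/- Let x₁, x₂ ∈ M₃(ℂ) be 3×3 complex matrices with x₁ᵀ = −x₁ (alternating) and x₂ᵀ = x₂ (symmetric). Then det(x₁ + x₂) = det(x₂) + tr(x₂ · adj(x₁)), where adj denotes the adjugate matrix and tr the trace. -/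
/-!
Polarizing the cubic form `det` on `3 × 3` matrices gives
`det (a + b) = det a + tr (b · adj a) + tr (a · adj b) + det b`.
For `a` alternating and `b` symmetric, `det a = 0` because `a` has odd size, and
`tr (a · adj b) = 0` because `adj b` is symmetric and the product of an alternating and a
symmetric matrix is traceless.
-/

open Matrix

namespace Matrix

variable {n R : Type*} [Fintype n] [CommRing R]

theorem det_add_fin_three (a b : Matrix (Fin 3) (Fin 3) R) :
    (a + b).det = a.det + (b * a.adjugate).trace + (a * b.adjugate).trace + b.det := by
  simp only [det_fin_three, adjugate_fin_three, trace_fin_three, mul_apply, Fin.sum_univ_three,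
    add_apply, of_apply, cons_val', cons_val_zero, cons_val_one, cons_val_two, head_cons,
    tail_cons, empty_val', cons_val_fin_one, head_fin_const]
  ring

theorem det_eq_zero_of_transpose_eq_neg [DecidableEq n] [IsAddTorsionFree R] {A : Matrix n n R}
    (hA : Aᵀ = -A) (hn : Odd (Fintype.card n)) : A.det = 0 := by
  rw [← self_eq_neg]
  calc A.det = Aᵀ.det := (det_transpose A).symm
    _ = -A.det := by rw [hA, det_neg, hn.neg_one_pow, neg_one_mul]

theorem trace_mul_eq_zero_of_transpose_eq_neg_of_transpose_eq [IsAddTorsionFree R]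
    {A S : Matrix n n R} (hA : Aᵀ = -A) (hS : Sᵀ = S) : (A * S).trace = 0 := by
  rw [← self_eq_neg]
  calc (A * S).trace = (A * S)ᵀ.trace := (trace_transpose _).symm
    _ = -(A * S).trace := by rw [transpose_mul, hA, hS, mul_neg, trace_neg, trace_mul_comm]

end Matrix

/-- Lemma 7.1(3) for `(𝔭⁺,𝔭₁⁺,𝔭₂⁺) = (M(3,ℂ), Alt(3,ℂ), Sym(3,ℂ))`: for `x₁`
alternating and `x₂` symmetric, `det(x₁+x₂) = det x₂ + tr(x₂·adj(x₁))`. -/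
theorem det_alt_add_sym (x₁ x₂ : Matrix (Fin 3) (Fin 3) ℂ)
    (h₁ : x₁ᵀ = -x₁) (h₂ : x₂ᵀ = x₂) :
    (x₁ + x₂).det = x₂.det + (x₂ * x₁.adjugate).trace := by
  have hdet : x₁.det = 0 := det_eq_zero_of_transpose_eq_neg h₁ (by decide)
  have htrace : (x₁ * x₂.adjugate).trace = 0 :=
    trace_mul_eq_zero_of_transpose_eq_neg_of_transpose_eq h₁ (by rw [adjugate_transpose, h₂])
  rw [det_add_fin_three, hdet, htrace, zero_add, add_zero, add_comm]
end

section
/- Let d, r, k be positive integers, let i, j ∈ {1,…,r} satisfy i + j ≥ r + 1, and let a₁, a₂ ∈ {1,…,k} satisfy a₁ + a₂ ≥ k + 1. Set λ := d(i−1)/2 + 1 − a₁ and μ := d(j−1)/2 + 1 − a₂. Then for every weakly decreasing tuple of integers m = (m₁,…,m_r) with k ≥ m₁ ≥ m₂ ≥ ⋯ ≥ m_r ≥ 0, one has ∏_{p=1}^{r} (−λ − k + 1 + d(r−p)/2)_{m_p} · ∏_{q=1}^{r} (−μ − k + 1 + d(q−1)/2)_{k−m_q} = 0. -/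
/-!
The Pochhammer symbol `(-n)_m` vanishes for natural numbers `n < m`. With `p := r + 1 - i` the
`d`-terms cancel and the `p`-th factor of the first product is `(a₁ - k)_{m_p}`, which vanishes
unless `m_p ≤ k - a₁`. In that case `j ≥ p` and monotonicity give `m_j ≤ m_p ≤ k - a₁ < a₂`, so
`k - m_j > k - a₂` and the `j`-th factor `(a₂ - k)_{k - m_j}` of the second product vanishes.
-/

open Finset

/-- The Pochhammer symbol `(z)_m := ∏_{t=0}^{m−1}(z+t)` in `ℂ`. -/
noncomputable def pochC (z : ℂ) (m : ℕ) : ℂ :=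
  ∏ t ∈ Finset.range m, (z + (t : ℂ))

theorem pochC_eq_ascPochhammer_eval (z : ℂ) (m : ℕ) :
    pochC z m = (ascPochhammer ℂ m).eval z := by
  induction m with
  | zero => simp [pochC]
  | succ m ih => rw [pochC, prod_range_succ, ← pochC, ih, ascPochhammer_succ_eval]

theorem pochC_neg_natCast_of_lt {n m : ℕ} (h : n < m) : pochC (-n) m = 0 := by
  rw [pochC_eq_ascPochhammer_eval, ascPochhammer_eval_neg_coe_nat_of_lt h]

theorem prod_pochC_eq_zero {s : Finset ℕ} {z : ℕ → ℂ} {m : ℕ → ℕ} {p n : ℕ}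
    (hp : p ∈ s) (hz : z p = -n) (hn : n < m p) : ∏ q ∈ s, pochC (z q) (m q) = 0 :=
  prod_eq_zero hp (hz ▸ pochC_neg_natCast_of_lt hn)

theorem coefficient_vanishes_general (d r k : ℕ)
    (i j : ℕ) (hi1 : 1 ≤ i) (hi2 : i ≤ r) (hj1 : 1 ≤ j) (hj2 : j ≤ r)
    (hij : r + 1 ≤ i + j)
    (a₁ a₂ : ℕ) (ha₁2 : a₁ ≤ k) (ha₂2 : a₂ ≤ k)
    (ha : k + 1 ≤ a₁ + a₂)
    (lam mu : ℂ)
    (hlam : lam = (d : ℂ) * ((i : ℂ) - 1) / 2 + 1 - (a₁ : ℂ))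
    (hmu : mu = (d : ℂ) * ((j : ℂ) - 1) / 2 + 1 - (a₂ : ℂ))
    (m : ℕ → ℕ)
    (hmdec : ∀ p q, 1 ≤ p → p ≤ q → q ≤ r → m q ≤ m p) :
    (∏ p ∈ Finset.Icc 1 r,
        pochC (-lam - (k : ℂ) + 1 + (d : ℂ) * ((r : ℂ) - (p : ℂ)) / 2) (m p)) *
      (∏ q ∈ Finset.Icc 1 r,
        pochC (-mu - (k : ℂ) + 1 + (d : ℂ) * ((q : ℂ) - 1) / 2) (k - m q)) = 0 := by
  have hp : r + 1 - i ∈ Icc 1 r := mem_Icc.2 ⟨by omega, by omega⟩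
  by_cases hmp : k - a₁ < m (r + 1 - i)
  · refine mul_eq_zero_of_left (prod_pochC_eq_zero (n := k - a₁) hp ?_ hmp) _
    push_cast [hlam, Nat.cast_sub (show i ≤ r + 1 by omega), Nat.cast_sub ha₁2]
    ring
  · have hmj : m j ≤ m (r + 1 - i) := hmdec _ _ (by omega) (by omega) hj2
    have hq : j ∈ Icc 1 r := mem_Icc.2 ⟨hj1, hj2⟩
    refine mul_eq_zero_of_right _ (prod_pochC_eq_zero (n := k - a₂) hq ?_ (by omega))
    push_cast [hmu, Nat.cast_sub ha₂2]
    ring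

/-- Section 8.3: vanishing of the coefficients `F_m(λ,μ)` of the Rankin–Cohen-type
polynomial `RC^{𝔫⁺}_{λ,μ,k}` at `(λ,μ) ∈ Z^{k,d}_{i,j}` with `i + j ≥ r + 1`. -/
theorem coefficient_vanishes (d r k : ℕ) (hd : 0 < d) (hr : 0 < r) (hk : 0 < k)
    (i j : ℕ) (hi1 : 1 ≤ i) (hi2 : i ≤ r) (hj1 : 1 ≤ j) (hj2 : j ≤ r)
    (hij : r + 1 ≤ i + j)
    (a₁ a₂ : ℕ) (ha₁1 : 1 ≤ a₁) (ha₁2 : a₁ ≤ k) (ha₂1 : 1 ≤ a₂) (ha₂2 : a₂ ≤ k)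
    (ha : k + 1 ≤ a₁ + a₂)
    (lam mu : ℂ)
    (hlam : lam = (d : ℂ) * ((i : ℂ) - 1) / 2 + 1 - (a₁ : ℂ))
    (hmu : mu = (d : ℂ) * ((j : ℂ) - 1) / 2 + 1 - (a₂ : ℂ))
    (m : ℕ → ℕ) (hm1 : m 1 ≤ k)
    (hmdec : ∀ p q, 1 ≤ p → p ≤ q → q ≤ r → m q ≤ m p) :
    (∏ p ∈ Finset.Icc 1 r,
        pochC (-lam - (k : ℂ) + 1 + (d : ℂ) * ((r : ℂ) - (p : ℂ)) / 2) (m p)) *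
      (∏ q ∈ Finset.Icc 1 r,
        pochC (-mu - (k : ℂ) + 1 + (d : ℂ) * ((q : ℂ) - 1) / 2) (k - m q)) = 0 :=
  coefficient_vanishes_general d r k i j hi1 hi2 hj1 hj2 hij a₁ a₂ ha₁2 ha₂2 ha lam mu hlam hmu m
    hmdec
end

section
/- Let d and r₂ be positive integers, k ∈ ℤ_{++}^{r₂} (with k_{r₂+1} := 0), and write |k| := k₁ + ⋯ + k_{r₂}. Then the following identity of rational functions of λ holds (equivalently, the polynomial identity in ℂ[X] obtained by cross-multiplying all denominators): 2^{|k|} · [∏_{1≤i<j≤r₂}(2λ − 1 − d(i+j−1))_{k_i+k_j} / ∏_{1≤i<j≤r₂+1}(2λ − 1 − d(i+j−2))_{k_i+k_j}] · [∏_{i=1}^{r₂}(λ − 1/2 − d(2i−1)/2)_{k_i} / ∏_{i=1}^{r₂}(λ − d(i−1))_{k_i}] = [∏_{1≤i<j≤r₂}(λ − d(i+j−1)/2)_{⌊(k_i+k_j)/2⌋} · ∏_{1≤i≤j≤r₂}(λ − 1/2 − d(i+j−1)/2)_{⌈(k_i+k_j)/2⌉}] / [∏_{1≤i≤j≤r₂+1}(λ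 − d(i+j−2)/2)_{⌊(k_i+k_j)/2⌋} · ∏_{1≤i<j≤r₂+1}(λ − 1/2 − d(i+j−2)/2)_{⌈(k_i+k_j)/2⌉}]. -/
/-!
Splitting the factors of `(2λ - 1 - c)_m` by the parity of their index gives
`(2λ - 1 - c)_m = 2^m (λ - c/2)_{⌊m/2⌋} (λ - 1/2 - c/2)_{⌈m/2⌉}`. Applied to the two
products over `i < j`, this turns both sides into the same products, up to the diagonal
`i = j` of the products over `i ≤ j`, where `⌊(k_i + k_i)/2⌋ = ⌈(k_i + k_i)/2⌉ = k_i`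
yields the single-index factors, and up to the row `j = r₂ + 1`, which because
`k_{r₂+1} = 0` contributes exactly `2^{|k|}`.
-/

open Polynomial Finset

/-- `(p)_m := ∏_{t=0}^{m−1}(p + t)` for a polynomial `p ∈ ℂ[X]`. -/
noncomputable def pochOf (p : Polynomial ℂ) (m : ℕ) : Polynomial ℂ :=
  ∏ t ∈ Finset.range m, (p + (t : Polynomial ℂ))

theorem prod_range_add_natCast_eq_two_pow_mul {S : Type*} [CommSemiring S] {x y z : S}
    (hy : x = 2 * y) (hz : x + 1 = 2 * z) (m : ℕ) :
    ∏ t ∈ range m, (x + t) =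
      2 ^ m * (∏ t ∈ range ((m + 1) / 2), (y + t)) * ∏ t ∈ range (m / 2), (z + t) := by
  have heven (s : ℕ) : x + (2 * s : ℕ) = 2 * (y + s) := by rw [hy]; push_cast; ring
  have hodd (s : ℕ) : x + (2 * s + 1 : ℕ) = 2 * (z + s) := by
    rw [Nat.cast_add_one, ← add_assoc, add_right_comm, hz]; push_cast; ring
  induction m using Nat.twoStepInduction with
  | zero => simp
  | one => simp [hy]
  | more m ih _ =>
    rw [prod_range_succ, prod_range_succ, ih, show (m + 2 + 1) / 2 = (m + 1) / 2 + 1 by omega,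
      show (m + 2) / 2 = m / 2 + 1 by omega, prod_range_succ, prod_range_succ]
    obtain ⟨s, rfl | rfl⟩ := Nat.even_or_odd' m
    · rw [show (2 * s + 1) / 2 = s by omega, show 2 * s / 2 = s by omega, heven, hodd]
      ring
    · rw [show (2 * s + 1 + 1) / 2 = s + 1 by omega, show (2 * s + 1) / 2 = s by omega, hodd,
        show 2 * s + 1 + 1 = 2 * (s + 1) by ring, heven]
      push_cast; ring

theorem pochOf_C_two_mul_X_sub_C (c : ℂ) (m : ℕ) :
    pochOf (C 2 * X - C (1 + c)) m =
      C (2 ^ m) * pochOf (X - C (c / 2)) (m / 2) *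
        pochOf (X - C (1 / 2 + c / 2)) ((m + 1) / 2) := by
  have hy : C (1 + c) = 2 * C (1 / 2 + c / 2) := by
    rw [← map_ofNat C 2, ← C_mul]; congr 1; ring
  have hz : C (1 + c) = 1 + 2 * C (c / 2) := by
    rw [← map_ofNat C 2, ← C_mul, ← C_1, ← C_add]; congr 1; ring
  rw [pochOf, prod_range_add_natCast_eq_two_pow_mul (y := X - C (1 / 2 + c / 2))
    (z := X - C (c / 2)), pochOf, pochOf, map_pow, map_ofNat]
  · ring
  · rw [hy, map_ofNat]; ring
  · rw [hz, map_ofNat]; ring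

theorem pochOf_zero (p : ℂ[X]) : pochOf p 0 = 1 := prod_range_zero _

theorem prod_Icc_prod_Icc_eq_prod_diag_mul {M : Type*} [CommMonoid M] (a b : ℕ)
    (f : ℕ → ℕ → M) :
    ∏ i ∈ Icc a b, ∏ j ∈ Icc i b, f i j =
      (∏ i ∈ Icc a b, f i i) * ∏ i ∈ Icc a b, ∏ j ∈ Icc (i + 1) b, f i j := by
  rw [← prod_mul_distrib]
  refine prod_congr rfl fun i hi => ?_
  rw [Icc_add_one_left_eq_Ioc, mul_prod_Ioc_eq_prod_Icc (mem_Icc.1 hi).2]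

theorem sum_Icc_sum_Icc_succ_top {M : Type*} [AddCommMonoid M] {a b : ℕ} (hab : a ≤ b + 1)
    (f : ℕ → ℕ → M) :
    ∑ i ∈ Icc a (b + 1), ∑ j ∈ Icc (i + 1) (b + 1), f i j =
      ∑ i ∈ Icc a b, ∑ j ∈ Icc (i + 1) b, f i j + ∑ i ∈ Icc a b, f i (b + 1) := by
  rw [sum_Icc_succ_top hab, Icc_eq_empty (a := b + 1 + 1) (by omega), sum_empty, add_zero,
    ← sum_add_distrib]
  exact sum_congr rfl fun i hi => sum_Icc_succ_top (by have := (mem_Icc.1 hi).2; omega) _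

theorem const2_two_expressions_general (d r₂ : ℕ)
    (k : ℕ → ℕ) (hk0 : k (r₂ + 1) = 0) :
    Polynomial.C ((2 : ℂ) ^ (∑ i ∈ Finset.Icc 1 r₂, k i)) *
      (∏ i ∈ Finset.Icc 1 r₂, ∏ j ∈ Finset.Icc (i + 1) r₂,
        pochOf (Polynomial.C 2 * Polynomial.X -
          Polynomial.C (1 + (d : ℂ) * ((i : ℂ) + (j : ℂ) - 1))) (k i + k j)) *
      (∏ i ∈ Finset.Icc 1 r₂,
        pochOf (Polynomial.X -
          Polynomial.C (1 / 2 + (d : ℂ) * (2 * (i : ℂ) - 1) / 2)) (k i)) *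
      ((∏ i ∈ Finset.Icc 1 (r₂ + 1), ∏ j ∈ Finset.Icc i (r₂ + 1),
        pochOf (Polynomial.X -
          Polynomial.C ((d : ℂ) * ((i : ℂ) + (j : ℂ) - 2) / 2)) ((k i + k j) / 2)) *
       ∏ i ∈ Finset.Icc 1 (r₂ + 1), ∏ j ∈ Finset.Icc (i + 1) (r₂ + 1),
        pochOf (Polynomial.X -
          Polynomial.C (1 / 2 + (d : ℂ) * ((i : ℂ) + (j : ℂ) - 2) / 2)) ((k i + k j + 1) / 2)) =
    ((∏ i ∈ Finset.Icc 1 r₂, ∏ j ∈ Finset.Icc (i + 1) r₂,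
        pochOf (Polynomial.X -
          Polynomial.C ((d : ℂ) * ((i : ℂ) + (j : ℂ) - 1) / 2)) ((k i + k j) / 2)) *
       ∏ i ∈ Finset.Icc 1 r₂, ∏ j ∈ Finset.Icc i r₂,
        pochOf (Polynomial.X -
          Polynomial.C (1 / 2 + (d : ℂ) * ((i : ℂ) + (j : ℂ) - 1) / 2)) ((k i + k j + 1) / 2)) *
      (∏ i ∈ Finset.Icc 1 (r₂ + 1), ∏ j ∈ Finset.Icc (i + 1) (r₂ + 1),
        pochOf (Polynomial.C 2 * Polynomial.X -
          Polynomial.C (1 + (d : ℂ) * ((i : ℂ) + (j : ℂ) - 2))) (k i + k j)) *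
      (∏ i ∈ Finset.Icc 1 r₂,
        pochOf (Polynomial.X - Polynomial.C ((d : ℂ) * ((i : ℂ) - 1))) (k i)) := by
  simp_rw [pochOf_C_two_mul_X_sub_C, prod_mul_distrib, ← map_prod, prod_pow_eq_pow_sum]
  rw [prod_Icc_prod_Icc_eq_prod_diag_mul 1 r₂, prod_Icc_prod_Icc_eq_prod_diag_mul 1 (r₂ + 1),
    sum_Icc_sum_Icc_succ_top (by omega),
    prod_Icc_succ_top (by omega) (fun i => pochOf _ ((k i + k i) / 2)), hk0]
  have hfloor (n : ℕ) : (n + n) / 2 = n := by omega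
  have hceil (n : ℕ) : (n + n + 1) / 2 = n := by omega
  have hshift_floor (i : ℕ) : (d : ℂ) * (i + i - 2) / 2 = d * (i - 1) := by ring
  have hshift_ceil (i : ℕ) : (d : ℂ) * (i + i - 1) / 2 = d * (2 * i - 1) / 2 := by ring
  simp only [hfloor, hceil, hshift_floor, hshift_ceil, add_zero, Nat.zero_div, pochOf_zero,
    mul_one, pow_add, map_mul]
  ring

/-- Theorem 6.1, case ε₂ = 2: equality of the two closed-form expressions (const2)
for `C₂^{d,2d}(λ,k)`, stated as the polynomial identity in `λ` obtained by
cross-multiplying all denominators. -/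
theorem const2_two_expressions (d r₂ : ℕ) (hd : 0 < d) (hr₂ : 0 < r₂)
    (k : ℕ → ℕ) (hk : ∀ i j, 1 ≤ i → i ≤ j → j ≤ r₂ → k j ≤ k i)
    (hk0 : k (r₂ + 1) = 0) :
    Polynomial.C ((2 : ℂ) ^ (∑ i ∈ Finset.Icc 1 r₂, k i)) *
      (∏ i ∈ Finset.Icc 1 r₂, ∏ j ∈ Finset.Icc (i + 1) r₂,
        pochOf (Polynomial.C 2 * Polynomial.X -
          Polynomial.C (1 + (d : ℂ) * ((i : ℂ) + (j : ℂ) - 1))) (k i + k j)) *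
      (∏ i ∈ Finset.Icc 1 r₂,
        pochOf (Polynomial.X -
          Polynomial.C (1 / 2 + (d : ℂ) * (2 * (i : ℂ) - 1) / 2)) (k i)) *
      ((∏ i ∈ Finset.Icc 1 (r₂ + 1), ∏ j ∈ Finset.Icc i (r₂ + 1),
        pochOf (Polynomial.X -
          Polynomial.C ((d : ℂ) * ((i : ℂ) + (j : ℂ) - 2) / 2)) ((k i + k j) / 2)) *
       ∏ i ∈ Finset.Icc 1 (r₂ + 1), ∏ j ∈ Finset.Icc (i + 1) (r₂ + 1),
        pochOf (Polynomial.X -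
          Polynomial.C (1 / 2 + (d : ℂ) * ((i : ℂ) + (j : ℂ) - 2) / 2)) ((k i + k j + 1) / 2)) =
    ((∏ i ∈ Finset.Icc 1 r₂, ∏ j ∈ Finset.Icc (i + 1) r₂,
        pochOf (Polynomial.X -
          Polynomial.C ((d : ℂ) * ((i : ℂ) + (j : ℂ) - 1) / 2)) ((k i + k j) / 2)) *
       ∏ i ∈ Finset.Icc 1 r₂, ∏ j ∈ Finset.Icc i r₂,
        pochOf (Polynomial.X -
          Polynomial.C (1 / 2 + (d : ℂ) * ((i : ℂ) + (j : ℂ) - 1) / 2)) ((k i + k j + 1) / 2)) *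
      (∏ i ∈ Finset.Icc 1 (r₂ + 1), ∏ j ∈ Finset.Icc (i + 1) (r₂ + 1),
        pochOf (Polynomial.C 2 * Polynomial.X -
          Polynomial.C (1 + (d : ℂ) * ((i : ℂ) + (j : ℂ) - 2))) (k i + k j)) *
      (∏ i ∈ Finset.Icc 1 r₂,
        pochOf (Polynomial.X - Polynomial.C ((d : ℂ) * ((i : ℂ) - 1))) (k i)) :=
  const2_two_expressions_general d r₂ k hk0
end

section
/- Let d and r be positive integers with r ≥ 1 and k ∈ ℤ_{++}^{r} (with k_{r+1} := 0). Then the following identity of rational functions of ν holds (equivalently, the polynomial identity obtained by cross-multiplying denominators): C̃^d(ν, (k₁,…,k_r)) = C̃^d(ν + 2k_r, (k₁−k_r, …, k_{r−1}−k_r)) · ∏_{i=1}^{r}(ν + k_i − 1 − d(i+r−2)/2)_{k_r}, where on the right-hand side C̃^d is formed for the (r−1)-tuple (k₁−k_r,…,k_{r−1}−k_r) ∈ ℤ_{++}^{r−1}. Explicitly: ∏_{1≤i≤j≤r}(ν − 1 − d(i+j−2)/2)_{k_i+k_j} / ∏_{1≤i<j≤r+1}(ν − 1 − d(i+j−3)/2)_{k_i+k_j}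 = [∏_{1≤i≤j≤r−1}(ν + 2k_r − 1 − d(i+j−2)/2)_{k_i+k_j−2k_r} / ∏_{1≤i<j≤r}(ν + 2k_r − 1 − d(i+j−3)/2)_{k_i+k_j−2k_r}] · ∏_{i=1}^{r}(ν + k_i − 1 − d(i+r−2)/2)_{k_r}. -/
/-!
Put `K = k_r` and split Pochhammer symbols by `(p)_{m+n} = (p)_m (p+m)_n`. In the row `j = r` of
the numerator, `(ν−1−d(i+r−2)/2)_{k_i+K}` is the denominator factor at `(i, r+1)` (where
`k_{r+1} = 0`) times `(ν+k_i−1−d(i+r−2)/2)_K`. Every other factor, of the numerator at `(i, j)`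
with `j < r` or of the denominator at `(i, j+1)` with `j < r`, splits off a head of length `2K`
that depends only on `i + j`, so the heads cancel; the remaining tails are the factors of the
rank `r−1` constant at `ν + 2K`.
-/

open Polynomial Finset

lemma pochOf_add (p : ℂ[X]) (m n : ℕ) :
    pochOf p (m + n) = pochOf p m * pochOf (p + m) n := by
  unfold pochOf
  rw [prod_range_add]
  congr 1
  refine prod_congr rfl fun t _ => ?_
  push_cast
  ring

lemma pochOf_mul_pochOf_add_sub (p : ℂ[X]) {N m n : ℕ} (hm : N ≤ m) (hn : N ≤ n) :
    pochOf p m * pochOf (p + N) (n - N) = pochOf (p + N) (m - N) * pochOf p n := by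
  obtain ⟨m, rfl⟩ := Nat.exists_eq_add_of_le hm
  obtain ⟨n, rfl⟩ := Nat.exists_eq_add_of_le hn
  simp only [Nat.add_sub_cancel_left, pochOf_add]
  ring

lemma X_sub_C_add_natCast (a : ℂ) (N : ℕ) : X - C a + (N : ℂ[X]) = X + C (N - a) := by
  rw [← C_eq_natCast, C_sub]
  ring

lemma prod_upperTriangle_succ {M : Type*} [CommMonoid M] (f : ℕ → ℕ → M) (n : ℕ) :
    ∏ i ∈ Icc 1 (n + 1), ∏ j ∈ Icc i (n + 1), f i j
      = (∏ i ∈ Icc 1 n, ∏ j ∈ Icc i n, f i j) * ∏ i ∈ Icc 1 (n + 1), f i (n + 1) := by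
  rw [prod_congr rfl fun i hi => prod_Icc_succ_top (mem_Icc.1 hi).2 _, prod_mul_distrib,
    prod_Icc_succ_top (by omega : 1 ≤ n + 1), Icc_eq_empty (by omega : ¬n + 1 ≤ n),
    prod_empty, mul_one]

lemma prod_strictUpperTriangle_succ {M : Type*} [CommMonoid M] (f : ℕ → ℕ → M) (n : ℕ) :
    ∏ i ∈ Icc 1 (n + 1), ∏ j ∈ Icc (i + 1) (n + 1), f i j
      = ∏ i ∈ Icc 1 n, ∏ j ∈ Icc i n, f i (j + 1) := by
  rw [prod_Icc_succ_top (by omega : 1 ≤ n + 1), Icc_eq_empty (by omega : ¬n + 1 + 1 ≤ n + 1),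
    prod_empty, mul_one]
  refine prod_congr rfl fun i _ => ?_
  rw [← map_add_right_Icc, prod_map]
  rfl

/-- `a i j` and `b i j` stand for `1 + d(i+j−2)/2` and `1 + d(i+j−3)/2`. -/
theorem pochOf_triangle_recursion (a b : ℕ → ℕ → ℂ) (hab : ∀ i j, b i (j + 1) = a i j)
    (k : ℕ → ℕ) (s : ℕ) (hK : ∀ i ∈ Icc 1 (s + 1), k (s + 1) ≤ k i) (hk0 : k (s + 1 + 1) = 0) :
    (∏ i ∈ Icc 1 (s + 1), ∏ j ∈ Icc i (s + 1), pochOf (X - C (a i j)) (k i + k j)) *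
      (∏ i ∈ Icc 1 (s + 1), ∏ j ∈ Icc (i + 1) (s + 1),
        pochOf (X + C (2 * (k (s + 1) : ℂ) - b i j)) (k i + k j - 2 * k (s + 1))) =
    (∏ i ∈ Icc 1 s, ∏ j ∈ Icc i s,
        pochOf (X + C (2 * (k (s + 1) : ℂ) - a i j)) (k i + k j - 2 * k (s + 1))) *
      (∏ i ∈ Icc 1 (s + 1), pochOf (X + C ((k i : ℂ) - a i (s + 1))) (k (s + 1))) *
      (∏ i ∈ Icc 1 (s + 1 + 1), ∏ j ∈ Icc (i + 1) (s + 1 + 1),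
        pochOf (X - C (b i j)) (k i + k j)) := by
  set K := k (s + 1)
  have edge : ∏ i ∈ Icc 1 (s + 1), pochOf (X - C (a i (s + 1))) (k i + K)
      = (∏ i ∈ Icc 1 (s + 1), pochOf (X - C (b i (s + 1 + 1))) (k i + k (s + 1 + 1))) *
        ∏ i ∈ Icc 1 (s + 1), pochOf (X + C ((k i : ℂ) - a i (s + 1))) K := by
    rw [← prod_mul_distrib]
    refine prod_congr rfl fun i _ => ?_
    rw [hab, hk0, add_zero, pochOf_add, X_sub_C_add_natCast]
  have inner : (∏ i ∈ Icc 1 s, ∏ j ∈ Icc i s, pochOf (X - C (a i j)) (k i + k j)) *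
        ∏ i ∈ Icc 1 s, ∏ j ∈ Icc i s,
          pochOf (X + C (2 * (K : ℂ) - b i (j + 1))) (k i + k (j + 1) - 2 * K)
      = (∏ i ∈ Icc 1 s, ∏ j ∈ Icc i s,
          pochOf (X + C (2 * (K : ℂ) - a i j)) (k i + k j - 2 * K)) *
        ∏ i ∈ Icc 1 s, ∏ j ∈ Icc i s, pochOf (X - C (b i (j + 1))) (k i + k (j + 1)) := by
    simp only [← prod_mul_distrib]
    refine prod_congr rfl fun i hi => prod_congr rfl fun j hj => ?_
    obtain ⟨hi1, -⟩ := mem_Icc.1 hi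
    obtain ⟨hij, hjs⟩ := mem_Icc.1 hj
    have hKi := hK i (mem_Icc.2 ⟨hi1, by omega⟩)
    have hKj := hK j (mem_Icc.2 ⟨by omega, by omega⟩)
    have hKj' := hK (j + 1) (mem_Icc.2 ⟨by omega, by omega⟩)
    have h := pochOf_mul_pochOf_add_sub (X - C (a i j))
      (by omega : 2 * K ≤ k i + k j) (by omega : 2 * K ≤ k i + k (j + 1))
    rw [X_sub_C_add_natCast, Nat.cast_mul, Nat.cast_ofNat] at h
    rwa [hab]
  rw [prod_upperTriangle_succ, prod_strictUpperTriangle_succ, prod_strictUpperTriangle_succ,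
    prod_upperTriangle_succ, edge]
  rw [mul_right_comm, inner]
  ac_rfl

theorem tensor_const_recursion_general (d r : ℕ) (hr : 1 ≤ r)
    (k : ℕ → ℕ) (hk : ∀ i j, 1 ≤ i → i ≤ j → j ≤ r → k j ≤ k i)
    (hk0 : k (r + 1) = 0) :
    (∏ i ∈ Finset.Icc 1 r, ∏ j ∈ Finset.Icc i r,
        pochOf (Polynomial.X -
          Polynomial.C (1 + (d : ℂ) * ((i : ℂ) + (j : ℂ) - 2) / 2)) (k i + k j)) *
      (∏ i ∈ Finset.Icc 1 r, ∏ j ∈ Finset.Icc (i + 1) r,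
        pochOf (Polynomial.X +
          Polynomial.C (2 * (k r : ℂ) - 1 - (d : ℂ) * ((i : ℂ) + (j : ℂ) - 3) / 2))
          (k i + k j - 2 * k r)) =
    (∏ i ∈ Finset.Icc 1 (r - 1), ∏ j ∈ Finset.Icc i (r - 1),
        pochOf (Polynomial.X +
          Polynomial.C (2 * (k r : ℂ) - 1 - (d : ℂ) * ((i : ℂ) + (j : ℂ) - 2) / 2))
          (k i + k j - 2 * k r)) *
      (∏ i ∈ Finset.Icc 1 r,
        pochOf (Polynomial.X +
          Polynomial.C ((k i : ℂ) - 1 - (d : ℂ) * ((i : ℂ) + (r : ℂ) - 2) / 2)) (k r)) *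
      (∏ i ∈ Finset.Icc 1 (r + 1), ∏ j ∈ Finset.Icc (i + 1) (r + 1),
        pochOf (Polynomial.X -
          Polynomial.C (1 + (d : ℂ) * ((i : ℂ) + (j : ℂ) - 3) / 2)) (k i + k j)) := by
  obtain ⟨s, rfl⟩ : ∃ s, r = s + 1 := ⟨r - 1, by omega⟩
  have key := pochOf_triangle_recursion (fun i j => 1 + (d : ℂ) * ((i : ℂ) + (j : ℂ) - 2) / 2)
    (fun i j => 1 + (d : ℂ) * ((i : ℂ) + (j : ℂ) - 3) / 2) (fun i j => by push_cast; ring) k s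
    (fun i hi => hk i (s + 1) (mem_Icc.1 hi).1 (mem_Icc.1 hi).2 le_rfl) hk0
  rw [Nat.add_sub_cancel]
  simpa only [sub_sub] using key

/-- The inductive step (rank `r` to rank `r−1`) of Theorem 8.4:
`C̃^d(ν,(k₁,…,k_r)) = C̃^d(ν+2k_r,(k₁−k_r,…,k_{r−1}−k_r)) · ∏_{i=1}^r(ν+k_i−1−d(i+r−2)/2)_{k_r}`,
stated as the polynomial identity obtained by cross-multiplying denominators. -/
theorem tensor_const_recursion (d r : ℕ) (hd : 0 < d) (hr : 1 ≤ r)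
    (k : ℕ → ℕ) (hk : ∀ i j, 1 ≤ i → i ≤ j → j ≤ r → k j ≤ k i)
    (hk0 : k (r + 1) = 0) :
    (∏ i ∈ Finset.Icc 1 r, ∏ j ∈ Finset.Icc i r,
        pochOf (Polynomial.X -
          Polynomial.C (1 + (d : ℂ) * ((i : ℂ) + (j : ℂ) - 2) / 2)) (k i + k j)) *
      (∏ i ∈ Finset.Icc 1 r, ∏ j ∈ Finset.Icc (i + 1) r,
        pochOf (Polynomial.X +
          Polynomial.C (2 * (k r : ℂ) - 1 - (d : ℂ) * ((i : ℂ) + (j : ℂ) - 3) / 2))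
          (k i + k j - 2 * k r)) =
    (∏ i ∈ Finset.Icc 1 (r - 1), ∏ j ∈ Finset.Icc i (r - 1),
        pochOf (Polynomial.X +
          Polynomial.C (2 * (k r : ℂ) - 1 - (d : ℂ) * ((i : ℂ) + (j : ℂ) - 2) / 2))
          (k i + k j - 2 * k r)) *
      (∏ i ∈ Finset.Icc 1 r,
        pochOf (Polynomial.X +
          Polynomial.C ((k i : ℂ) - 1 - (d : ℂ) * ((i : ℂ) + (r : ℂ) - 2) / 2)) (k r)) *
      (∏ i ∈ Finset.Icc 1 (r + 1), ∏ j ∈ Finset.Icc (i + 1) (r + 1),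
        pochOf (Polynomial.X -
          Polynomial.C (1 + (d : ℂ) * ((i : ℂ) + (j : ℂ) - 3) / 2)) (k i + k j)) :=
  tensor_const_recursion_general d r hr k hk hk0
end
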